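/- In the saddle-point setting with inexact preconditioning, where M_U = [[F, Bᵀ],[0, H2]], M̃_U = [[P₁, Bᵀ],[0, H2]], P₁ ∈ ℝ^{n×n} is nonsingular, ‖F⁻¹P₁‖_{H1} ≤ C₄, and H = blockdiag(H1, H2), one has ‖(M̃_U⁻¹K)⁻¹‖_H ≤ (C₄ + 1) ‖(M_U⁻¹K)⁻¹‖_H. -/

import Mathlib

/-!
Since `F` has positive definite symmetric part it is invertible, and
`M̃_U = M_U · D` with `D = blockdiag(F⁻¹P₁, I)`. Hence
`(M̃_U⁻¹K)⁻¹ = K⁻¹M̃_U = (M_U⁻¹K)⁻¹ D`, and the `H`-norm of the block diagonal `D` is at most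
`max(‖F⁻¹P₁‖_{H1}, 1) ≤ C₄ + 1`.
-/

open Matrix

/-- The `H`-norm of a vector: `‖u‖_H = (uᵀ H u)^{1/2}`. -/
noncomputable def vnorm {α : Type*} [Fintype α] (H : Matrix α α ℝ) (u : α → ℝ) : ℝ :=
  Real.sqrt (u ⬝ᵥ (H *ᵥ u))

/-- The weighted operator norm `‖M‖_{H1,H2} = sup_{v ≠ 0} ‖M v‖_{H2} / ‖v‖_{H1}`.
For a square matrix, `‖M‖_H = wnorm H H M`; the spectral norm is `wnorm 1 1 M`. -/
noncomputable def wnorm {α β : Type*} [Fintype α] [Fintype β]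
    (H1 : Matrix α α ℝ) (H2 : Matrix β β ℝ) (M : Matrix β α ℝ) : ℝ :=
  sSup {r : ℝ | ∃ v : α → ℝ, v ≠ 0 ∧ r = vnorm H2 (M *ᵥ v) / vnorm H1 v}

section WeightedNorm

variable {α β γ : Type*} [Fintype α] [Fintype β] [Fintype γ]

lemma vnorm_nonneg (H : Matrix α α ℝ) (u : α → ℝ) : 0 ≤ vnorm H u :=
  Real.sqrt_nonneg _

lemma vnorm_pos {H : Matrix α α ℝ} (hH : H.PosDef) {u : α → ℝ} (hu : u ≠ 0) :
    0 < vnorm H u :=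
  Real.sqrt_pos.2 (by simpa using hH.re_dotProduct_pos hu)

lemma sq_vnorm {H : Matrix α α ℝ} (hH : H.PosSemidef) (u : α → ℝ) :
    vnorm H u ^ 2 = u ⬝ᵥ (H *ᵥ u) :=
  Real.sq_sqrt (by simpa using hH.re_dotProduct_nonneg u)

lemma vnorm_transpose_mul_self (S : Matrix β α ℝ) (u : α → ℝ) :
    vnorm (Sᵀ * S) u = ‖WithLp.toLp 2 (S *ᵥ u)‖ := by
  rw [vnorm, EuclideanSpace.norm_eq, ← mulVec_mulVec, dotProduct_mulVec, vecMul_transpose]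
  simp [dotProduct, sq]

-- Factor `H1 = S1ᵀ S1` (with `S1` invertible) and `H2 = S2ᵀ S2`; then the constant is the
-- Euclidean operator norm of `S2 M S1⁻¹`.
open scoped MatrixOrder Matrix.Norms.L2Operator in
lemma exists_vnorm_mulVec_le {H1 : Matrix α α ℝ} {H2 : Matrix β β ℝ} (h1 : H1.PosDef)
    (h2 : H2.PosSemidef) (M : Matrix β α ℝ) :
    ∃ c, ∀ u, vnorm H2 (M *ᵥ u) ≤ c * vnorm H1 u := by
  classical
  obtain ⟨S1, hS1, rfl⟩ :=
    CStarAlgebra.isStrictlyPositive_iff_eq_star_mul_self.mp h1.isStrictlyPositive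
  obtain ⟨S2, rfl⟩ := CStarAlgebra.nonneg_iff_eq_star_mul_self.mp h2.nonneg
  refine ⟨‖S2 * M * S1⁻¹‖, fun u => ?_⟩
  have hu : S2 *ᵥ (M *ᵥ u) = (S2 * M * S1⁻¹) *ᵥ (S1 *ᵥ u) := by
    rw [mulVec_mulVec, mulVec_mulVec, Matrix.mul_assoc _ S1⁻¹,
      nonsing_inv_mul _ ((isUnit_iff_isUnit_det _).mp hS1), Matrix.mul_one]
  have h := l2_opNorm_mulVec (S2 * M * S1⁻¹) (WithLp.toLp 2 (S1 *ᵥ u))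
  rw [← hu] at h
  simp only [star_eq_conjTranspose, conjTranspose_eq_transpose_of_trivial,
    vnorm_transpose_mul_self]
  exact h

lemma wnorm_nonneg (H1 : Matrix α α ℝ) (H2 : Matrix β β ℝ) (M : Matrix β α ℝ) :
    0 ≤ wnorm H1 H2 M :=
  Real.sSup_nonneg fun _ ⟨_, _, hr⟩ => hr ▸ div_nonneg (vnorm_nonneg _ _) (vnorm_nonneg _ _)

lemma vnorm_mulVec_le_wnorm {H1 : Matrix α α ℝ} {H2 : Matrix β β ℝ} (h1 : H1.PosDef)
    (h2 : H2.PosSemidef) (M : Matrix β α ℝ) (u : α → ℝ) :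
    vnorm H2 (M *ᵥ u) ≤ wnorm H1 H2 M * vnorm H1 u := by
  rcases eq_or_ne u 0 with rfl | hu
  · simp [vnorm]
  obtain ⟨c, hc⟩ := exists_vnorm_mulVec_le h1 h2 M
  have hbdd : BddAbove {r : ℝ | ∃ v, v ≠ 0 ∧ r = vnorm H2 (M *ᵥ v) / vnorm H1 v} :=
    ⟨c, fun _ ⟨v, hv, hr⟩ => hr ▸ (div_le_iff₀ (vnorm_pos h1 hv)).2 (hc v)⟩
  exact (div_le_iff₀ (vnorm_pos h1 hu)).1 (le_csSup hbdd ⟨u, hu, rfl⟩)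

lemma wnorm_le {H1 : Matrix α α ℝ} {H2 : Matrix β β ℝ} {M : Matrix β α ℝ} {C : ℝ} (hC : 0 ≤ C)
    (h : ∀ u, vnorm H2 (M *ᵥ u) ≤ C * vnorm H1 u) : wnorm H1 H2 M ≤ C :=
  Real.sSup_le (fun _ ⟨v, _, hr⟩ => hr ▸ div_le_of_le_mul₀ (vnorm_nonneg _ _) hC (h v)) hC

lemma wnorm_one_le [DecidableEq α] (H : Matrix α α ℝ) : wnorm H H 1 ≤ 1 :=
  wnorm_le zero_le_one fun u => by simp

lemma wnorm_mul_le {H1 : Matrix α α ℝ} {H2 : Matrix β β ℝ} {H3 : Matrix γ γ ℝ}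
    (h1 : H1.PosDef) (h2 : H2.PosDef) (h3 : H3.PosSemidef) (A : Matrix γ β ℝ)
    (B : Matrix β α ℝ) : wnorm H1 H3 (A * B) ≤ wnorm H2 H3 A * wnorm H1 H2 B :=
  wnorm_le (mul_nonneg (wnorm_nonneg _ _ _) (wnorm_nonneg _ _ _)) fun u => calc
    vnorm H3 ((A * B) *ᵥ u) = vnorm H3 (A *ᵥ (B *ᵥ u)) := by rw [mulVec_mulVec]
    _ ≤ wnorm H2 H3 A * vnorm H2 (B *ᵥ u) := vnorm_mulVec_le_wnorm h2 h3 _ _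
    _ ≤ wnorm H2 H3 A * (wnorm H1 H2 B * vnorm H1 u) :=
      mul_le_mul_of_nonneg_left (vnorm_mulVec_le_wnorm h1 h2.posSemidef _ _) (wnorm_nonneg _ _ _)
    _ = wnorm H2 H3 A * wnorm H1 H2 B * vnorm H1 u := (mul_assoc _ _ _).symm

end WeightedNorm

section BlockDiagonal

variable {α β : Type*} [Fintype α] [Fintype β]

lemma dotProduct_fromBlocks_mulVec (H1 : Matrix α α ℝ) (H2 : Matrix β β ℝ) (x : α ⊕ β → ℝ) :
    x ⬝ᵥ (fromBlocks H1 0 0 H2 *ᵥ x) =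
      (x ∘ Sum.inl) ⬝ᵥ (H1 *ᵥ (x ∘ Sum.inl)) + (x ∘ Sum.inr) ⬝ᵥ (H2 *ᵥ (x ∘ Sum.inr)) := by
  simp [fromBlocks_mulVec, dotProduct, Fintype.sum_sum_type]

lemma sq_vnorm_fromBlocks {H1 : Matrix α α ℝ} {H2 : Matrix β β ℝ} (h1 : H1.PosSemidef)
    (h2 : H2.PosSemidef) (x : α ⊕ β → ℝ) :
    vnorm (fromBlocks H1 0 0 H2) x ^ 2 =
      vnorm H1 (x ∘ Sum.inl) ^ 2 + vnorm H2 (x ∘ Sum.inr) ^ 2 := by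
  rw [sq_vnorm h1, sq_vnorm h2, vnorm, dotProduct_fromBlocks_mulVec, Real.sq_sqrt]
  rw [← sq_vnorm h1, ← sq_vnorm h2]
  positivity

lemma Matrix.PosDef.fromBlocks_zero_zero {H1 : Matrix α α ℝ} {H2 : Matrix β β ℝ} (h1 : H1.PosDef)
    (h2 : H2.PosDef) : (fromBlocks H1 0 0 H2).PosDef := by
  refine .of_dotProduct_mulVec_pos ?_ fun x hx => ?_
  · exact h1.isHermitian.fromBlocks (by simp) h2.isHermitian
  have hx' : x ∘ Sum.inl ≠ 0 ∨ x ∘ Sum.inr ≠ 0 := by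
    by_contra! h
    exact hx (funext fun i => i.rec (congrFun h.1) (congrFun h.2))
  have q1 := sq_vnorm h1.posSemidef (x ∘ Sum.inl)
  have q2 := sq_vnorm h2.posSemidef (x ∘ Sum.inr)
  rw [star_trivial, dotProduct_fromBlocks_mulVec, ← q1, ← q2]
  rcases hx' with h | h
  · have := vnorm_pos h1 h; positivity
  · have := vnorm_pos h2 h; positivity

lemma wnorm_fromBlocks_le_max {H1 : Matrix α α ℝ} {H2 : Matrix β β ℝ} (h1 : H1.PosDef)
    (h2 : H2.PosDef) (A : Matrix α α ℝ) (D : Matrix β β ℝ) :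
    wnorm (fromBlocks H1 0 0 H2) (fromBlocks H1 0 0 H2) (fromBlocks A 0 0 D) ≤
      max (wnorm H1 H1 A) (wnorm H2 H2 D) := by
  set c := max (wnorm H1 H1 A) (wnorm H2 H2 D)
  have hc : 0 ≤ c := le_max_of_le_left (wnorm_nonneg _ _ _)
  refine wnorm_le hc fun x => ?_
  have hA : vnorm H1 (A *ᵥ (x ∘ Sum.inl)) ≤ c * vnorm H1 (x ∘ Sum.inl) :=
    (vnorm_mulVec_le_wnorm h1 h1.posSemidef A _).trans
      (mul_le_mul_of_nonneg_right (le_max_left _ _) (vnorm_nonneg _ _))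
  have hD : vnorm H2 (D *ᵥ (x ∘ Sum.inr)) ≤ c * vnorm H2 (x ∘ Sum.inr) :=
    (vnorm_mulVec_le_wnorm h2 h2.posSemidef D _).trans
      (mul_le_mul_of_nonneg_right (le_max_right _ _) (vnorm_nonneg _ _))
  have hx : fromBlocks A 0 0 D *ᵥ x = Sum.elim (A *ᵥ (x ∘ Sum.inl)) (D *ᵥ (x ∘ Sum.inr)) := by
    simp [fromBlocks_mulVec]
  refine (pow_le_pow_iff_left₀ (vnorm_nonneg _ _) (mul_nonneg hc (vnorm_nonneg _ _))
    two_ne_zero).1 ?_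
  rw [mul_pow, sq_vnorm_fromBlocks h1.posSemidef h2.posSemidef,
    sq_vnorm_fromBlocks h1.posSemidef h2.posSemidef, hx, Sum.elim_comp_inl, Sum.elim_comp_inr]
  calc vnorm H1 (A *ᵥ (x ∘ Sum.inl)) ^ 2 + vnorm H2 (D *ᵥ (x ∘ Sum.inr)) ^ 2
      ≤ (c * vnorm H1 (x ∘ Sum.inl)) ^ 2 + (c * vnorm H2 (x ∘ Sum.inr)) ^ 2 :=
        add_le_add (pow_le_pow_left₀ (vnorm_nonneg _ _) hA 2)
          (pow_le_pow_left₀ (vnorm_nonneg _ _) hD 2)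
    _ = c ^ 2 * (vnorm H1 (x ∘ Sum.inl) ^ 2 + vnorm H2 (x ∘ Sum.inr) ^ 2) := by ring

end BlockDiagonal

lemma isUnit_det_of_posDef_symmPart {α : Type*} [Fintype α] [DecidableEq α]
    {F : Matrix α α ℝ} (hF : (((1 : ℝ) / 2) • (F + Fᵀ)).PosDef) : IsUnit F.det := by
  refine isUnit_iff_ne_zero.2 fun h0 => ?_
  obtain ⟨x, hx, hFx⟩ := exists_mulVec_eq_zero_iff.2 h0
  have hpos := hF.re_dotProduct_pos hx
  simp [smul_mulVec, add_mulVec, hFx, dotProduct_mulVec _ Fᵀ, vecMul_transpose] at hpos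

lemma fromBlocks_zero₂₁_eq_mul {α β R : Type*} [Fintype α] [Fintype β] [DecidableEq α]
    [DecidableEq β] [CommRing R] {F : Matrix α α R} (hF : IsUnit F.det) (P : Matrix α α R)
    (B : Matrix α β R) (D : Matrix β β R) :
    fromBlocks P B 0 D = fromBlocks F B 0 D * fromBlocks (F⁻¹ * P) 0 0 1 := by
  simp [fromBlocks_multiply, ← Matrix.mul_assoc, mul_nonsing_inv _ hF]

theorem stmt_16_general
    {n m : ℕ} (F : Matrix (Fin n) (Fin n) ℝ) (B : Matrix (Fin m) (Fin n) ℝ)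
    (H1 : Matrix (Fin n) (Fin n) ℝ) (H2 : Matrix (Fin m) (Fin m) ℝ)
    (hH1 : H1 = ((1 : ℝ)/2) • (F + Fᵀ))
    (hH1pd : H1.PosDef) (hH2pd : H2.PosDef)
    (C₄ : ℝ) (hC4 : 0 < C₄)
    (P₁ : Matrix (Fin n) (Fin n) ℝ) (hP₁ : IsUnit P₁.det)
    (hFP1 : wnorm H1 H1 (F⁻¹ * P₁) ≤ C₄)
    (K MU MUt H : Matrix (Fin n ⊕ Fin m) (Fin n ⊕ Fin m) ℝ)
    (hMU : MU = fromBlocks F Bᵀ 0 H2)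
    (hMUt : MUt = fromBlocks P₁ Bᵀ 0 H2)
    (hH : H = fromBlocks H1 0 0 H2) :
    wnorm H H (MUt⁻¹ * K)⁻¹ ≤ (C₄ + 1) * wnorm H H (MU⁻¹ * K)⁻¹ := by
  have hF : IsUnit F.det := isUnit_det_of_posDef_symmPart (hH1 ▸ hH1pd)
  have hH2 : IsUnit H2.det := hH2pd.det_pos.ne'.isUnit
  have hMU_det : IsUnit MU.det := by rw [hMU, det_fromBlocks_zero₂₁]; exact hF.mul hH2
  have hMUt_det : IsUnit MUt.det := by rw [hMUt, det_fromBlocks_zero₂₁]; exact hP₁.mul hH2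
  have hHpd : H.PosDef := hH ▸ hH1pd.fromBlocks_zero_zero hH2pd
  set D : Matrix (Fin n ⊕ Fin m) (Fin n ⊕ Fin m) ℝ := fromBlocks (F⁻¹ * P₁) 0 0 1
  have hD : wnorm H H D ≤ C₄ + 1 := calc
    wnorm H H D ≤ max (wnorm H1 H1 (F⁻¹ * P₁)) (wnorm H2 H2 1) :=
      hH ▸ wnorm_fromBlocks_le_max hH1pd hH2pd _ _
    _ ≤ max C₄ 1 := max_le_max hFP1 (wnorm_one_le H2)
    _ ≤ C₄ + 1 := max_le (by linarith) (by linarith)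
  have hMUt_inv : (MUt⁻¹ * K)⁻¹ = K⁻¹ * MU * D := by
    rw [Matrix.mul_inv_rev, nonsing_inv_nonsing_inv _ hMUt_det, Matrix.mul_assoc, hMUt, hMU,
      ← fromBlocks_zero₂₁_eq_mul hF]
  have hMU_inv : (MU⁻¹ * K)⁻¹ = K⁻¹ * MU := by
    rw [Matrix.mul_inv_rev, nonsing_inv_nonsing_inv _ hMU_det]
  rw [hMUt_inv, hMU_inv, mul_comm (C₄ + 1)]
  calc wnorm H H (K⁻¹ * MU * D) ≤ wnorm H H (K⁻¹ * MU) * wnorm H H D :=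
      wnorm_mul_le hHpd hHpd hHpd.posSemidef _ _
    _ ≤ wnorm H H (K⁻¹ * MU) * (C₄ + 1) := mul_le_mul_of_nonneg_left hD (wnorm_nonneg _ _ _)

theorem stmt_16
    {n m : ℕ} (F : Matrix (Fin n) (Fin n) ℝ) (B : Matrix (Fin m) (Fin n) ℝ)
    (H1 N : Matrix (Fin n) (Fin n) ℝ) (H2 : Matrix (Fin m) (Fin m) ℝ)
    (hH1 : H1 = ((1 : ℝ)/2) • (F + Fᵀ)) (hN : N = ((1 : ℝ)/2) • (F - Fᵀ))
    (hH1pd : H1.PosDef) (hH2pd : H2.PosDef)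
    (hBrank : B.rank = m)
    (C₄ : ℝ) (hC4 : 0 < C₄)
    (P₁ : Matrix (Fin n) (Fin n) ℝ) (hP₁ : IsUnit P₁.det)
    (hFP1 : wnorm H1 H1 (F⁻¹ * P₁) ≤ C₄)
    (K MU MUt H : Matrix (Fin n ⊕ Fin m) (Fin n ⊕ Fin m) ℝ)
    (hK : K = fromBlocks F Bᵀ B 0)
    (hMU : MU = fromBlocks F Bᵀ 0 H2)
    (hMUt : MUt = fromBlocks P₁ Bᵀ 0 H2)
    (hH : H = fromBlocks H1 0 0 H2)
    (hKns : IsUnit K.det) (hMUKns : IsUnit (MU⁻¹ * K).det) :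
    wnorm H H (MUt⁻¹ * K)⁻¹ ≤ (C₄ + 1) * wnorm H H (MU⁻¹ * K)⁻¹ :=
  stmt_16_general F B H1 H2 hH1 hH1pd hH2pd C₄ hC4 P₁ hP₁ hFP1 K MU MUt H hMU hMUt hH
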